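/- arXiv:2512.02314 — 2 statements merged into one kernel-verified Lean document; each statement's English description precedes it below -/
import Mathlib

section
/- Let f, g ∈ ℤ[u,u⁻¹] be Laurent polynomials that are symmetric nonnegative trapezoidal. Then the product f · g is symmetric nonnegative trapezoidal. -/
open Finset LaurentPolynomial

/-- A Laurent polynomial over `ℤ` is symmetric nonnegative trapezoidal if all its
coefficients are nonnegative, it is symmetric about zero, and its coefficient
sequence strictly increases up to a plateau around zero (hence, by symmetry,
strictly decreases afterwards). -/
def SymNonnegTrapezoidal (f : LaurentPolynomial ℤ) : Prop :=
  (∀ n : ℤ, 0 ≤ f.coeff n) ∧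
  (∀ n : ℤ, f.coeff (-n) = f.coeff n) ∧
  ∃ k d : ℤ, 0 ≤ k ∧ k ≤ d ∧
    (∀ n : ℤ, d < |n| → f.coeff n = 0) ∧
    (∀ n : ℤ, -d ≤ n → n < -k → f.coeff n < f.coeff (n + 1)) ∧
    (∀ n : ℤ, -k ≤ n → n < k → f.coeff n = f.coeff (n + 1))

noncomputable def bx (m : ℤ) : LaurentPolynomial ℤ := ∑ i ∈ Icc (-m) m, T i

lemma bx_apply (m n : ℤ) : (bx m).coeff n = if n ∈ Icc (-m) m then 1 else 0 := by
  unfold bx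
  rw [AddMonoidAlgebra.coeff_sum, Finsupp.finset_sum_apply]
  simp only [T_apply]
  rw [Finset.sum_ite_eq' (Icc (-m) m) n (fun _ => (1:ℤ))]

def trap (m m' n : ℤ) : ℤ :=
  max 0 (min (min (2*m+1) (2*m'+1)) (min (m+m'+1-n) (m+m'+1+n)))

lemma IccInter (a b c d : ℤ) : Icc a b ∩ Icc c d = Icc (max a c) (min b d) := by
  ext x; simp only [Finset.mem_inter, Finset.mem_Icc]; omega

lemma bx_mul_bx (m m' : ℤ) (n : ℤ) :
    (bx m * bx m').coeff n = trap m m' n := by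
  unfold bx
  rw [Finset.sum_mul_sum]
  simp only [← T_add]
  rw [AddMonoidAlgebra.coeff_sum, Finsupp.finset_sum_apply]
  have h1 : ∀ i : ℤ, (∑ j ∈ Icc (-m') m', T (i + j) : LaurentPolynomial ℤ).coeff n
      = if i ∈ Icc (n - m') (n + m') then (1:ℤ) else 0 := by
    intro i
    rw [AddMonoidAlgebra.coeff_sum, Finsupp.finset_sum_apply]
    simp only [T_apply]
    have : ∀ j ∈ Icc (-m') m', (if i + j = n then (1:ℤ) else 0) = if j = n - i then 1 else 0 := by
      intro j _; congr 1; simp only [eq_iff_iff]; omega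
    rw [Finset.sum_congr rfl this, Finset.sum_ite_eq' (Icc (-m') m') (n - i) (fun _ => (1:ℤ))]
    congr 1; simp only [Finset.mem_Icc, eq_iff_iff]; omega
  rw [Finset.sum_congr rfl (fun i _ => h1 i)]
  rw [Finset.sum_ite_mem, Finset.sum_const, IccInter, nsmul_eq_mul, mul_one]
  rw [Int.card_Icc]
  rw [trap]
  push_cast [Int.toNat_eq_max]
  omega

lemma tele (F : ℤ → ℤ) (a b : ℤ) (h : a ≤ b + 1) :
    ∑ m ∈ Icc a b, (F m - F (m+1)) = F a - F (b+1) := by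
  have key : ∀ t : ℕ, ∀ b : ℤ, b + 1 - a = t → ∑ m ∈ Icc a b, (F m - F (m+1)) = F a - F (b+1) := by
    intro t
    induction t with
    | zero =>
        intro b hb
        have h1 : Icc a b = ∅ := by rw [Finset.Icc_eq_empty_iff]; omega
        have h2 : b + 1 = a := by omega
        rw [h1, Finset.sum_empty, h2]; ring
    | succ t ih =>
        intro b hb
        have hins : Icc a b = insert b (Icc a (b-1)) := by
          ext x; simp only [Finset.mem_insert, Finset.mem_Icc]; omega
        have hnm : b ∉ Icc a (b-1) := by simp only [Finset.mem_Icc]; omega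
        rw [hins, Finset.sum_insert hnm, ih (b-1) (by omega)]
        have h3 : b - 1 + 1 = b := by ring
        rw [h3]; ring
  exact key (b + 1 - a).toNat b (by omega)

lemma plateau (f : LaurentPolynomial ℤ) (k : ℤ)
    (hflat : ∀ n, -k ≤ n → n < k → f.coeff n = f.coeff (n+1)) :
    ∀ j, -k ≤ j → j ≤ k → f.coeff j = f.coeff k := by
  suffices H : ∀ t : ℕ, ∀ j, -k ≤ j → k - j = t → f.coeff j = f.coeff k by
    intro j h1 h2; exact H (k - j).toNat j h1 (by omega)
  intro t
  induction t with
  | zero =>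
      intro j h1 h2
      have hjk : j = k := by omega
      exact congrArg f.coeff hjk
  | succ t ih =>
      intro j h1 h2
      rw [hflat j h1 (by omega)]
      exact ih (j+1) (by omega) (by omega)

lemma decomp (f : LaurentPolynomial ℤ) (k d : ℤ) (h0k : 0 ≤ k) (hkd : k ≤ d)
    (hsym : ∀ n, f.coeff (-n) = f.coeff n)
    (hvan : ∀ n, d < |n| → f.coeff n = 0)
    (hflat : ∀ n, -k ≤ n → n < k → f.coeff n = f.coeff (n+1)) :
    f = ∑ m ∈ Icc k d, (f.coeff m - f.coeff (m+1)) • bx m := by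
  apply LaurentPolynomial.ext
  intro n
  rw [AddMonoidAlgebra.coeff_sum, Finsupp.finset_sum_apply]
  set a := max k |n| with ha_def
  have hka : k ≤ a := le_max_left _ _
  have hna : |n| ≤ a := le_max_right _ _
  have h0n : (0:ℤ) ≤ |n| := abs_nonneg n
  have step : ∀ m ∈ Icc k d, (((f.coeff m - f.coeff (m+1)) • bx m).coeff n : ℤ)
      = if a ≤ m then f.coeff m - f.coeff (m+1) else 0 := by
    intro m hm
    simp only [Finset.mem_Icc] at hm
    rw [AddMonoidAlgebra.coeff_smul_apply, bx_apply, smul_eq_mul, mul_ite, mul_one, mul_zero]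
    congr 1
    simp only [eq_iff_iff, Finset.mem_Icc, ha_def, max_le_iff, abs_le]
    constructor
    · exact fun h => ⟨hm.1, h⟩
    · exact fun h => h.2
  rw [Finset.sum_congr rfl step, ← Finset.sum_filter]
  have hfil : (Icc k d).filter (fun m => a ≤ m) = Icc a d := by
    ext x
    simp only [Finset.mem_filter, Finset.mem_Icc]
    omega
  rw [hfil]
  by_cases hn : |n| ≤ d
  · have had : a ≤ d := max_le hkd hn
    rw [tele f.coeff a d (by omega)]
    have hd1 : f.coeff (d + 1) = 0 := hvan (d+1) (by rw [abs_of_nonneg (by omega)]; omega)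
    rw [hd1, sub_zero]
    have habs : f.coeff |n| = f.coeff n := by
      rcases le_total 0 n with h | h
      · rw [abs_of_nonneg h]
      · rw [abs_of_nonpos h]; exact hsym n
    by_cases hk : k ≤ |n|
    · have : a = |n| := by omega
      rw [this, habs]
    · have h1 : a = k := by omega
      rw [h1]
      rw [← habs]
      exact plateau f k hflat |n| (by omega) (by omega)
  · have h1 : Icc a d = ∅ := by rw [Finset.Icc_eq_empty_iff]; omega
    rw [h1, Finset.sum_empty, hvan n (by omega)]

lemma zero_trap : SymNonnegTrapezoidal 0 := by
  refine ⟨fun n => ?_, fun n => ?_, 0, 0, le_refl _, le_refl _, fun n _ => ?_, fun n h1 h2 => by omega, fun n h1 h2 => by omega⟩ <;>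
    simp [Finsupp.coe_zero]

lemma normTrap (f : LaurentPolynomial ℤ) (hf : SymNonnegTrapezoidal f) :
    f = 0 ∨ ∃ k d : ℤ, 0 ≤ k ∧ k ≤ d ∧
      (∀ n : ℤ, d < |n| → f.coeff n = 0) ∧
      (∀ n : ℤ, -d ≤ n → n < -k → f.coeff n < f.coeff (n + 1)) ∧
      (∀ n : ℤ, -k ≤ n → n < k → f.coeff n = f.coeff (n + 1)) ∧ 0 < f.coeff d := by
  obtain ⟨hpos, hsym, k, d, h0k, hkd, hvan, hstr, hflat⟩ := hf
  by_cases hfd : 0 < f.coeff d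
  · exact Or.inr ⟨k, d, h0k, hkd, hvan, hstr, hflat, hfd⟩
  have hfd0 : f.coeff d = 0 := le_antisymm (not_lt.mp hfd) (hpos d)
  by_cases hk : k = d
  · left
    apply LaurentPolynomial.ext
    intro n
    simp only [AddMonoidAlgebra.coeff_zero, Finsupp.coe_zero, Pi.zero_apply]
    by_cases hn : |n| ≤ d
    · have h1 : f.coeff n = f.coeff k := by
        subst hk
        exact plateau f k hflat n (by cases abs_le.mp hn; omega) (by cases abs_le.mp hn; omega)
      rw [h1, hk, hfd0]
    · exact hvan n (by omega)
  · right
    have hkd' : k < d := lt_of_le_of_ne hkd hk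
    refine ⟨k, d - 1, h0k, by omega, ?_, ?_, hflat, ?_⟩
    · intro n hn
      by_cases h : d < |n|
      · exact hvan n h
      · have habs : |n| = d := by omega
        rcases (abs_eq (by omega : (0:ℤ) ≤ d)).mp habs with h | h
        · rw [h]; exact hfd0
        · rw [h, hsym d]; exact hfd0
    · intro n h1 h2
      exact hstr n (by omega) h2
    · have h1 : f.coeff (-d) < f.coeff (-d + 1) := hstr (-d) (by omega) (by omega)
      have h2 : f.coeff (-d) = f.coeff d := hsym d
      have h3 : f.coeff (-d + 1) = f.coeff (d - 1) := by
        have : -d + 1 = -(d-1) := by ring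
        rw [this, hsym]
      omega

/-- The product of two symmetric nonnegative trapezoidal Laurent polynomials is
symmetric nonnegative trapezoidal. -/
theorem symNonnegTrapezoidal_mul (f g : LaurentPolynomial ℤ)
    (hf : SymNonnegTrapezoidal f) (hg : SymNonnegTrapezoidal g) :
    SymNonnegTrapezoidal (f * g) := by
  rcases normTrap f hf with hf0 | ⟨k₁, d₁, hk₁, hkd₁, hvan₁, hstr₁, hflat₁, hfd₁⟩
  · rw [hf0, zero_mul]; exact zero_trap
  rcases normTrap g hg with hg0 | ⟨k₂, d₂, hk₂, hkd₂, hvan₂, hstr₂, hflat₂, hgd₂⟩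
  · rw [hg0, mul_zero]; exact zero_trap
  obtain ⟨hfpos, hfsym, -⟩ := hf
  obtain ⟨hgpos, hgsym, -⟩ := hg
  -- positivity of the difference coefficients
  have hc₁ : ∀ m ∈ Icc k₁ d₁, 0 < f.coeff m - f.coeff (m+1) := by
    intro m hm
    simp only [Finset.mem_Icc] at hm
    by_cases hmd : m = d₁
    · rw [hmd]
      have h0 : f.coeff (d₁ + 1) = 0 := hvan₁ (d₁+1) (by rw [abs_of_nonneg (by omega)]; omega)
      have h1 : 0 ≤ f.coeff d₁ := hfpos d₁
      omega
    · have h1 : f.coeff (-(m+1)) < f.coeff (-(m+1) + 1) := hstr₁ (-(m+1)) (by omega) (by omega)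
      have h2 : f.coeff (-(m+1)) = f.coeff (m+1) := hfsym (m+1)
      have h3 : f.coeff (-(m+1) + 1) = f.coeff m := by
        have he : -(m+1) + 1 = -m := by ring
        rw [he, hfsym]
      omega
  have hc₂ : ∀ m ∈ Icc k₂ d₂, 0 < g.coeff m - g.coeff (m+1) := by
    intro m hm
    simp only [Finset.mem_Icc] at hm
    by_cases hmd : m = d₂
    · rw [hmd]
      have h0 : g.coeff (d₂ + 1) = 0 := hvan₂ (d₂+1) (by rw [abs_of_nonneg (by omega)]; omega)
      omega
    · have h1 : g.coeff (-(m+1)) < g.coeff (-(m+1) + 1) := hstr₂ (-(m+1)) (by omega) (by omega)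
      have h2 : g.coeff (-(m+1)) = g.coeff (m+1) := hgsym (m+1)
      have h3 : g.coeff (-(m+1) + 1) = g.coeff m := by
        have he : -(m+1) + 1 = -m := by ring
        rw [he, hgsym]
      omega
  have hfd : f = ∑ m ∈ Icc k₁ d₁, (f.coeff m - f.coeff (m+1)) • bx m :=
    decomp f k₁ d₁ hk₁ hkd₁ hfsym hvan₁ hflat₁
  have hgd : g = ∑ m ∈ Icc k₂ d₂, (g.coeff m - g.coeff (m+1)) • bx m :=
    decomp g k₂ d₂ hk₂ hkd₂ hgsym hvan₂ hflat₂
  have key : ∀ n : ℤ, (f * g).coeff n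
      = ∑ m ∈ Icc k₁ d₁, ∑ m' ∈ Icc k₂ d₂,
          ((f.coeff m - f.coeff (m+1)) * (g.coeff m' - g.coeff (m'+1))) * trap m m' n := by
    intro n
    conv_lhs => rw [hfd, hgd]
    rw [Finset.sum_mul_sum, AddMonoidAlgebra.coeff_sum, Finsupp.finset_sum_apply]
    refine Finset.sum_congr rfl fun m hm => ?_
    rw [AddMonoidAlgebra.coeff_sum, Finsupp.finset_sum_apply]
    refine Finset.sum_congr rfl fun m' hm' => ?_
    rw [smul_mul_smul_comm, AddMonoidAlgebra.coeff_smul_apply, bx_mul_bx, smul_eq_mul]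
  set K : ℤ := max (max (k₁ - d₂) (k₂ - d₁)) 0 with hK_def
  set D : ℤ := d₁ + d₂ with hD_def
  refine ⟨?_, ?_, K, D, ?_, ?_, ?_, ?_, ?_⟩
  · -- nonneg
    intro n
    rw [key n]
    apply Finset.sum_nonneg
    intro m hm
    apply Finset.sum_nonneg
    intro m' hm'
    have := hc₁ m hm
    have := hc₂ m' hm'
    have ht : 0 ≤ trap m m' n := le_max_left _ _
    positivity
  · -- symmetry
    intro n
    rw [key n, key (-n)]
    refine Finset.sum_congr rfl fun m hm => Finset.sum_congr rfl fun m' hm' => ?_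
    congr 1
    unfold trap
    omega
  · -- 0 ≤ K
    exact le_max_right _ _
  · -- K ≤ D
    have := hk₁; have := hk₂; have := hkd₁; have := hkd₂
    omega
  · -- vanishing
    intro n hn
    rw [key n]
    apply Finset.sum_eq_zero
    intro m hm
    apply Finset.sum_eq_zero
    intro m' hm'
    simp only [Finset.mem_Icc] at hm hm'
    have ht : trap m m' n = 0 := by
      unfold trap
      rcases le_or_gt 0 n with h | h
      · rw [abs_of_nonneg h] at hn; omega
      · rw [abs_of_neg h] at hn; omega
    rw [ht, mul_zero]
  · -- strict increase
    intro n h1 h2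
    rw [key n, key (n+1)]
    have hs1 : K < -n := by omega
    have hs2 : -n ≤ D := by omega
    set s : ℤ := -n with hs_def
    have hKk1 : k₁ - d₂ ≤ K := le_trans (le_max_left _ _) (le_max_left _ _)
    have hKk2 : k₂ - d₁ ≤ K := le_trans (le_max_right _ _) (le_max_left _ _)
    have hK0 : 0 ≤ K := le_max_right _ _
    set m₀ : ℤ := min d₁ (d₂ + s - 1) with hm₀_def
    set m₀' : ℤ := min d₂ (m₀ + s - 1) with hm₀'_def
    have hm₀mem : m₀ ∈ Icc k₁ d₁ := by simp only [Finset.mem_Icc]; omega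
    have hm₀'mem : m₀' ∈ Icc k₂ d₂ := by simp only [Finset.mem_Icc]; omega
    apply Finset.sum_lt_sum
    · intro m hm
      apply Finset.sum_le_sum
      intro m' hm'
      have hcc : 0 ≤ (f.coeff m - f.coeff (m+1)) * (g.coeff m' - g.coeff (m'+1)) :=
        le_of_lt (mul_pos (hc₁ m hm) (hc₂ m' hm'))
      apply mul_le_mul_of_nonneg_left _ hcc
      unfold trap
      omega
    · refine ⟨m₀, hm₀mem, ?_⟩
      apply Finset.sum_lt_sum
      · intro m' hm'
        have hcc : 0 ≤ (f.coeff m₀ - f.coeff (m₀+1)) * (g.coeff m' - g.coeff (m'+1)) :=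
          le_of_lt (mul_pos (hc₁ m₀ hm₀mem) (hc₂ m' hm'))
        apply mul_le_mul_of_nonneg_left _ hcc
        unfold trap
        omega
      · refine ⟨m₀', hm₀'mem, ?_⟩
        have hcc : 0 < (f.coeff m₀ - f.coeff (m₀+1)) * (g.coeff m₀' - g.coeff (m₀'+1)) :=
          mul_pos (hc₁ m₀ hm₀mem) (hc₂ m₀' hm₀'mem)
        apply mul_lt_mul_of_pos_left _ hcc
        have hb1 : k₁ ≤ m₀ ∧ m₀ ≤ d₁ := Finset.mem_Icc.mp hm₀mem
        have hb2 : k₂ ≤ m₀' ∧ m₀' ≤ d₂ := Finset.mem_Icc.mp hm₀'mem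
        unfold trap
        omega
  · -- plateau
    intro n h1 h2
    rw [key n, key (n+1)]
    refine Finset.sum_congr rfl fun m hm => Finset.sum_congr rfl fun m' hm' => ?_
    simp only [Finset.mem_Icc] at hm hm'
    congr 1
    have hKk1 : k₁ - d₂ ≤ K := le_trans (le_max_left _ _) (le_max_left _ _)
    have hKk2 : k₂ - d₁ ≤ K := le_trans (le_max_right _ _) (le_max_left _ _)
    unfold trap
    omega
end

section
/- Let V be a finite type, G a simple graph on V, c : V → Bool a proper 2-coloring of G (every edge of G joins a vertex with c = true to a vertex with c = false), and p : V → Bool an arbitrary partition of the vertices. Suppose the number of vertices v with c v = true and p v = true equals the number of vertices v with c v = false and p v = true. Let M be a perfect matching of G. Then the number of edges of M joining a vertex with c = true and p = true to a vertex with c = false and p = false equals the number of edges of M joining a vertex with c = true and p = false to a vertex with c = false and p = true. -/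
/-- Let `G` be a simple graph on a finite vertex set `V`, properly 2-colored by
`c : V → Bool`, and let `p : V → Bool` be an arbitrary partition of the vertices
such that the number of vertices with `c = true, p = true` equals the number of
vertices with `c = false, p = true`. Then in any perfect matching `M` of `G`, the
number of edges joining a `(c = true, p = true)` vertex to a `(c = false, p = false)`
vertex equals the number of edges joining a `(c = true, p = false)` vertex to a
`(c = false, p = true)` vertex. -/
theorem perfectMatching_balanced_cross_edges {V : Type*} [Fintype V]
    (G : SimpleGraph V) (c p : V → Bool)
    (hc : ∀ v w : V, G.Adj v w → c v ≠ c w)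
    (hcount : (Finset.univ.filter (fun v : V => c v = true ∧ p v = true)).card
            = (Finset.univ.filter (fun v : V => c v = false ∧ p v = true)).card)
    (M : G.Subgraph) (hM : M.IsPerfectMatching) :
    {e ∈ M.edgeSet | ∃ v w : V, e = s(v, w) ∧
        c v = true ∧ p v = true ∧ c w = false ∧ p w = false}.ncard
      = {e ∈ M.edgeSet | ∃ v w : V, e = s(v, w) ∧
        c v = true ∧ p v = false ∧ c w = false ∧ p w = true}.ncard := by
  classical
  have hex : ∀ v : V, ∃! w, M.Adj v w := fun v => hM.1 (hM.2 v)
  set f : V → V := fun v => (hex v).choose with hfdef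
  have hf : ∀ v, M.Adj v (f v) := fun v => (hex v).choose_spec.1
  have hfu : ∀ v w, M.Adj v w → w = f v := fun v w h => (hex v).choose_spec.2 w h
  have hff : ∀ v, f (f v) = v := fun v => (hfu (f v) v (hf v).symm).symm
  have hcf : ∀ v, c (f v) ≠ c v := fun v => (hc v (f v) (M.adj_sub (hf v))).symm
  -- finsets of vertices
  set A : Finset V := Finset.univ.filter
    (fun v => c v = true ∧ p v = true ∧ p (f v) = false) with hA
  set B : Finset V := Finset.univ.filter
    (fun v => c v = false ∧ p v = true ∧ p (f v) = false) with hB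
  set S : Finset V := Finset.univ.filter
    (fun v => c v = true ∧ p v = true ∧ p (f v) = true) with hS
  set T : Finset V := Finset.univ.filter
    (fun v => c v = false ∧ p v = true ∧ p (f v) = true) with hT
  -- first set equals image of A
  have hset1 : {e ∈ M.edgeSet | ∃ v w : V, e = s(v, w) ∧
        c v = true ∧ p v = true ∧ c w = false ∧ p w = false}
      = (fun v => s(v, f v)) '' (A : Set V) := by
    ext e
    constructor
    · rintro ⟨he, v, w, rfl, hcv, hpv, hcw, hpw⟩
      have hadj : M.Adj v w := he
      have hw : w = f v := hfu v w hadj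
      refine ⟨v, ?_, by rw [hw]⟩
      simp [hA, hcv, hpv, ← hw, hpw]
    · rintro ⟨v, hv, rfl⟩
      simp only [hA, Finset.coe_filter, Set.mem_setOf_eq, Finset.mem_univ, true_and] at hv
      obtain ⟨hcv, hpv, hpfv⟩ := hv
      have hcfv : c (f v) = false := by
        have := hcf v; rw [hcv] at this; simpa using this
      exact ⟨(hf v), v, f v, rfl, hcv, hpv, hcfv, hpfv⟩
  -- second set equals image of B (map w ↦ s(f w, w))
  have hset2 : {e ∈ M.edgeSet | ∃ v w : V, e = s(v, w) ∧
        c v = true ∧ p v = false ∧ c w = false ∧ p w = true}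
      = (fun w => s(f w, w)) '' (B : Set V) := by
    ext e
    constructor
    · rintro ⟨he, v, w, rfl, hcv, hpv, hcw, hpw⟩
      have hadj : M.Adj w v := he.symm
      have hv : v = f w := hfu w v hadj
      refine ⟨w, ?_, by rw [hv]⟩
      simp [hB, hcw, hpw, ← hv, hpv]
    · rintro ⟨w, hw, rfl⟩
      simp only [hB, Finset.coe_filter, Set.mem_setOf_eq, Finset.mem_univ, true_and] at hw
      obtain ⟨hcw, hpw, hpfw⟩ := hw
      have hcfw : c (f w) = true := by
        have := hcf w; rw [hcw] at this; simpa using this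
      exact ⟨(hf w).symm, f w, w, rfl, hcfw, hpfw, hcw, hpw⟩
  -- injectivity on A
  have hinj1 : Set.InjOn (fun v => s(v, f v)) (A : Set V) := by
    intro v hv v' hv' h
    simp only [Sym2.eq, Sym2.rel_iff', Prod.mk.injEq, Prod.swap_prod_mk] at h
    rcases h with ⟨h1, _⟩ | ⟨h1, h2⟩
    · exact h1
    · exfalso
      simp only [hA, Finset.coe_filter, Set.mem_setOf_eq, Finset.mem_univ, true_and] at hv hv'
      have := hcf v'
      rw [← h1, hv.1, hv'.1] at this
      exact this rfl
  have hinj2 : Set.InjOn (fun w => s(f w, w)) (B : Set V) := by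
    intro v hv v' hv' h
    simp only [Sym2.eq, Sym2.rel_iff', Prod.mk.injEq, Prod.swap_prod_mk] at h
    rcases h with ⟨_, h2⟩ | ⟨h1, h2⟩
    · exact h2
    · exfalso
      simp only [hB, Finset.coe_filter, Set.mem_setOf_eq, Finset.mem_univ, true_and] at hv hv'
      have := hcf v'
      rw [← h2, hv.1, hv'.1] at this
      exact this rfl
  rw [hset1, hset2, Set.ncard_image_of_injOn hinj1, Set.ncard_image_of_injOn hinj2,
    Set.ncard_coe_finset, Set.ncard_coe_finset]
  -- now show A.card = B.card
  have hST : S.card = T.card := by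
    apply Finset.card_bij (fun v _ => f v)
    · intro v hv
      simp only [hS, Finset.mem_filter, Finset.mem_univ, true_and] at hv
      obtain ⟨hcv, hpv, hpfv⟩ := hv
      have hcfv : c (f v) = false := by
        have := hcf v; rw [hcv] at this; simpa using this
      simp [hT, hcfv, hpfv, hff, hpv]
    · intro v hv v' hv' h
      have := congrArg f h
      simpa [hff] using this
    · intro w hw
      simp only [hT, Finset.mem_filter, Finset.mem_univ, true_and] at hw
      obtain ⟨hcw, hpw, hpfw⟩ := hw
      have hcfw : c (f w) = true := by
        have := hcf w; rw [hcw] at this; simpa using this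
      exact ⟨f w, by simp [hS, hcfw, hpfw, hff, hpw], hff w⟩
  have hsplit1 : S.card + A.card
      = (Finset.univ.filter (fun v : V => c v = true ∧ p v = true)).card := by
    rw [hS, hA]
    have := Finset.card_filter_add_card_filter_not
      (s := Finset.univ.filter (fun v : V => c v = true ∧ p v = true))
      (p := fun v => p (f v) = true)
    simp only [Bool.not_eq_true, Finset.filter_filter] at this
    convert this using 3 <;> simp [and_assoc]
  have hsplit2 : T.card + B.card
      = (Finset.univ.filter (fun v : V => c v = false ∧ p v = true)).card := by
    rw [hT, hB]
    have := Finset.card_filter_add_card_filter_not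
      (s := Finset.univ.filter (fun v : V => c v = false ∧ p v = true))
      (p := fun v => p (f v) = true)
    simp only [Bool.not_eq_true, Finset.filter_filter] at this
    convert this using 3 <;> simp [and_assoc]
  omega
end
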